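/- arXiv:1312.6444 — 5 statements merged into one kernel-verified Lean document; each statement's English description precedes it below -/
import Mathlib

section
/- If ≿ is a transitive, complete and separable preference relation on subsets of a finite set O in which every object is desirable (i.e., {x} ≻ ∅ for every x ∈ O), then for all sets S' ⊊ S ⊆ O we have S ≻ S' (strict monotonicity with respect to set inclusion). -/
variable {α : Type*}

def strictPref (pref : Finset α → Finset α → Prop) (S T : Finset α) : Prop :=
  pref S T ∧ ¬ pref T S

def Separable [Fintype α] [DecidableEq α] (pref : Finset α → Finset α → Prop) : Prop :=
  ∀ (S : Finset α), ∀ x ∉ S, (strictPref pref {x} ∅ ↔ strictPref pref (insert x S) S)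

def MinimalBundle [Fintype α] [DecidableEq α] (pref : Finset α → Finset α → Prop)
    (S : Finset α) : Prop :=
  pref S Sᶜ ∧ ∀ T ⊂ S, strictPref pref Tᶜ T

theorem separable_strict_mono [Fintype α] [DecidableEq α]
    (pref : Finset α → Finset α → Prop)
    (htotal : ∀ S T : Finset α, pref S T ∨ pref T S)
    (htrans : ∀ S T U : Finset α, pref S T → pref T U → pref S U)
    (hsep : Separable pref)
    (hdes : ∀ x : α, strictPref pref {x} ∅) :
    ∀ S' S : Finset α, S' ⊂ S → strictPref pref S S' := by
  have key : ∀ n : ℕ, ∀ S' S : Finset α, S' ⊂ S → (S \ S').card = n →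
      strictPref pref S S' := by
    intro n
    induction n with
    | zero =>
      intro S' S hss hcard
      exfalso
      have := Finset.sdiff_nonempty.mpr (fun h => hss.2 h)
      rw [← Finset.card_pos, hcard] at this
      exact Nat.lt_irrefl 0 this
    | succ k ih =>
      intro S' S hss hcard
      obtain ⟨x, hx⟩ := Finset.sdiff_nonempty.mpr (fun h => hss.2 h)
      have hxS : x ∈ S := (Finset.mem_sdiff.mp hx).1
      have hxS' : x ∉ S' := (Finset.mem_sdiff.mp hx).2
      have hstep : strictPref pref (insert x S') S' :=
        (hsep S' x hxS').mp (hdes x)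
      have hsub : insert x S' ⊆ S :=
        Finset.insert_subset hxS hss.subset
      rcases eq_or_ne (insert x S') S with heq | hne
      · rw [← heq]; exact hstep
      · have hlt : insert x S' ⊂ S := ⟨hsub, fun h => hne (le_antisymm hsub h)⟩
        have hcard2 : (S \ insert x S').card = k := by
          have : S \ insert x S' = (S \ S').erase x := by
            ext y
            simp [Finset.mem_sdiff, Finset.mem_erase, Finset.mem_insert]
            tauto
          rw [this, Finset.card_erase_of_mem hx, hcard]; rfl
        have h1 := ih (insert x S') S hlt hcard2
        exact ⟨htrans _ _ _ h1.1 hstep.1,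
          fun h => h1.2 (htrans _ _ _ hstep.1 h)⟩
  intro S' S hss
  exact key (S \ S').card S' S hss rfl
end

section
/- Under a transitive, complete, separable preference relation with all objects desirable, if S ∼ −S (the agent is indifferent between S and its complement) and S is a minimal bundle for that agent, then −S is also a minimal bundle for that agent. -/
variable {α : Type*}

theorem compl_minimal_of_indifferent [Fintype α] [DecidableEq α]
    (pref : Finset α → Finset α → Prop)
    (htotal : ∀ S T : Finset α, pref S T ∨ pref T S)
    (htrans : ∀ S T U : Finset α, pref S T → pref T U → pref S U)
    (hsep : Separable pref)
    (hdes : ∀ x : α, strictPref pref {x} ∅)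
    (S : Finset α) (hindiff : pref S Sᶜ ∧ pref Sᶜ S)
    (hmb : MinimalBundle pref S) :
    MinimalBundle pref Sᶜ := by
  have hrefl : ∀ T : Finset α, pref T T := fun T => (htotal T T).elim id id
  have hstep : ∀ (T : Finset α) x, x ∉ T → strictPref pref (insert x T) T :=
    fun T x hx => (hsep T x hx).mp (hdes x)
  have hunion : ∀ (s T : Finset α), pref (T ∪ s) T := by
    intro s
    induction s using Finset.induction with
    | empty => intro T; simpa using hrefl T
    | @insert a s ha ih =>
      intro T
      by_cases h : a ∈ T ∪ s
      · have heq : T ∪ insert a s = T ∪ s := by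
          ext y
          simp only [Finset.mem_union, Finset.mem_insert]
          constructor
          · rintro (hy | rfl | hy)
            · exact Or.inl hy
            · simpa using h
            · exact Or.inr hy
          · rintro (hy | hy); exacts [Or.inl hy, Or.inr (Or.inr hy)]
        rw [heq]; exact ih T
      · have heq : T ∪ insert a s = insert a (T ∪ s) := by
          ext y
          simp only [Finset.mem_union, Finset.mem_insert]
          tauto
        rw [heq]
        exact htrans _ _ _ (hstep _ a h).1 (ih T)
  have hmono : ∀ T U : Finset α, T ⊆ U → pref U T := by
    intro T U hTU
    have heq : T ∪ (U \ T) = U := Finset.union_sdiff_of_subset hTU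
    exact heq ▸ hunion (U \ T) T
  have hsmono : ∀ T U : Finset α, T ⊂ U → strictPref pref U T := by
    intro T U hTU
    obtain ⟨x, hxU, hxT⟩ := Finset.exists_of_ssubset hTU
    have h1 : strictPref pref (insert x T) T := hstep T x hxT
    have h2 : pref U (insert x T) := hmono _ _ (Finset.insert_subset hxU hTU.subset)
    exact ⟨htrans _ _ _ h2 h1.1, fun h => h1.2 (htrans _ _ _ h h2)⟩
  refine ⟨by simpa using hindiff.2, ?_⟩
  intro T hT
  have h1 : S ⊂ Tᶜ := by
    have := Finset.compl_ssubset_compl.mpr hT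
    simpa using this
  have h2 : strictPref pref Tᶜ S := hsmono _ _ h1
  have h3 : pref Sᶜ T := hmono _ _ hT.subset
  exact ⟨htrans _ _ _ h2.1 (htrans _ _ _ hindiff.1 h3),
    fun h => h2.2 (htrans _ _ _ hindiff.1 (htrans _ _ _ h3 h))⟩
end

section
/- Suppose S is a minimal bundle for agent i, S is not a minimal bundle for agent −i, and S ≻_{−i} −S. Then there exists T ⊊ S with T ≿_{−i} −T, and for any such T the split in which agent i receives −T and agent −i receives T is envy-free. -/
variable {α : Type*}

theorem undercut_gives_envy_free [Fintype α] [DecidableEq α]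
    (prefi prefni : Finset α → Finset α → Prop)
    (htotali : ∀ S T : Finset α, prefi S T ∨ prefi T S)
    (htransi : ∀ S T U : Finset α, prefi S T → prefi T U → prefi S U)
    (hsepi : Separable prefi)
    (hdesi : ∀ x : α, strictPref prefi {x} ∅)
    (htotalni : ∀ S T : Finset α, prefni S T ∨ prefni T S)
    (htransni : ∀ S T U : Finset α, prefni S T → prefni T U → prefni S U)
    (hsepni : Separable prefni)
    (hdesni : ∀ x : α, strictPref prefni {x} ∅)
    (S : Finset α)
    (hmbi : MinimalBundle prefi S)
    (hnmbni : ¬ MinimalBundle prefni S)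
    (hstrict : strictPref prefni S Sᶜ) :
    (∃ T, T ⊂ S ∧ prefni T Tᶜ) ∧
      ∀ T, T ⊂ S → prefni T Tᶜ → (prefi Tᶜ T ∧ prefni T Tᶜ) := by
  constructor
  · by_contra h
    push_neg at h
    apply hnmbni
    refine ⟨hstrict.1, fun T hT => ⟨?_, h T hT⟩⟩
    rcases htotalni Tᶜ T with h1 | h1
    · exact h1
    · exact absurd h1 (h T hT)
  · intro T hT hni
    exact ⟨(hmbi.2 T hT).1, hni⟩
end

section
/- If both agents have complete, transitive, separable preferences with all objects desirable, then there exists a non-trivial envy-free split of O if and only if the two agents' sets of minimal bundles are not equal. -/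
variable {α : Type*}

/-- Monotonicity: a superset is weakly preferred. -/
lemma pref_mono [Fintype α] [DecidableEq α] (pref : Finset α → Finset α → Prop)
    (htotal : ∀ S T : Finset α, pref S T ∨ pref T S)
    (htrans : ∀ S T U : Finset α, pref S T → pref T U → pref S U)
    (hsep : Separable pref)
    (hdes : ∀ x : α, strictPref pref {x} ∅) :
    ∀ T S : Finset α, T ⊆ S → pref S T := by
  have hrefl : ∀ S : Finset α, pref S S := fun S => (htotal S S).elim id id
  intro T S hTS
  generalize hn : (S \ T).card = n
  induction n generalizing T with
  | zero =>
    have : S \ T = ∅ := Finset.card_eq_zero.mp hn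
    have : S = T := Finset.Subset.antisymm (fun x hx => by
      by_contra hxT
      exact absurd (Finset.mem_sdiff.mpr ⟨hx, hxT⟩) (by simp [this])) hTS
    rw [this]; exact hrefl T
  | succ n ih =>
    have hne : (S \ T).Nonempty := by
      rw [← Finset.card_pos, hn]; omega
    obtain ⟨x, hx⟩ := hne
    rw [Finset.mem_sdiff] at hx
    have hstep : pref (insert x T) T := ((hsep T x hx.2).mp (hdes x)).1
    have hsub : insert x T ⊆ S := Finset.insert_subset hx.1 hTS
    have hcard : (S \ insert x T).card = n := by
      have : S \ insert x T = (S \ T).erase x := by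
        ext y; simp [Finset.mem_sdiff, Finset.mem_erase, Finset.mem_insert]
        tauto
      rw [this, Finset.card_erase_of_mem (Finset.mem_sdiff.mpr hx), hn]
      omega
    exact htrans _ _ _ (ih (insert x T) hsub hcard) hstep

/-- Acceptable sets are upward closed. -/
lemma acceptable_up [Fintype α] [DecidableEq α] (pref : Finset α → Finset α → Prop)
    (htotal : ∀ S T : Finset α, pref S T ∨ pref T S)
    (htrans : ∀ S T U : Finset α, pref S T → pref T U → pref S U)
    (hsep : Separable pref)
    (hdes : ∀ x : α, strictPref pref {x} ∅)
    {T S : Finset α} (hTS : T ⊆ S) (hT : pref T Tᶜ) : pref S Sᶜ := by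
  have h1 : pref S T := pref_mono pref htotal htrans hsep hdes T S hTS
  have h2 : pref Tᶜ Sᶜ :=
    pref_mono pref htotal htrans hsep hdes Sᶜ Tᶜ (Finset.compl_subset_compl.mpr hTS)
  exact htrans _ _ _ (htrans _ _ _ h1 hT) h2

/-- Every acceptable set contains a minimal bundle. -/
lemma exists_minimal [Fintype α] [DecidableEq α] (pref : Finset α → Finset α → Prop)
    (htotal : ∀ S T : Finset α, pref S T ∨ pref T S) :
    ∀ S : Finset α, pref S Sᶜ → ∃ M ⊆ S, MinimalBundle pref M := by
  intro S
  induction S using Finset.strongInductionOn with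
  | _ S ih =>
    intro hS
    by_cases h : ∃ T, T ⊂ S ∧ pref T Tᶜ
    · obtain ⟨T, hTS, hT⟩ := h
      obtain ⟨M, hMT, hM⟩ := ih T hTS hT
      exact ⟨M, hMT.trans hTS.subset, hM⟩
    · push_neg at h
      refine ⟨S, Finset.Subset.refl S, hS, fun T hT => ?_⟩
      have : ¬ pref T Tᶜ := h T hT
      exact ⟨(htotal T Tᶜ).resolve_left this, this⟩

/-- Core construction: from a minimal bundle of agent 1 that is not one of agent 2,
produce a non-trivial envy-free split. Only needs totality of `pref2`. -/
lemma split_of_mb_diff [Fintype α] [DecidableEq α]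
    (pref1 pref2 : Finset α → Finset α → Prop)
    (htotal2 : ∀ S T : Finset α, pref2 S T ∨ pref2 T S)
    {S : Finset α} (h1 : MinimalBundle pref1 S) (h2 : ¬ MinimalBundle pref2 S) :
    ∃ B : Finset α, pref1 B Bᶜ ∧ pref2 Bᶜ B ∧ (¬ pref1 Bᶜ B ∨ ¬ pref2 B Bᶜ) := by
  by_cases hp2 : pref2 S Sᶜ
  · rw [MinimalBundle] at h2
    push_neg at h2
    obtain ⟨T, hTS, hT⟩ := h2 hp2
    have hT2 : pref2 T Tᶜ := by
      rcases htotal2 T Tᶜ with h | h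
      · exact h
      · by_contra hc; exact hT ⟨h, hc⟩
    have hstrict := h1.2 T hTS
    refine ⟨Tᶜ, ?_, ?_, Or.inl ?_⟩
    · rw [compl_compl]; exact hstrict.1
    · rw [compl_compl]; exact hT2
    · rw [compl_compl]; exact hstrict.2
  · exact ⟨S, h1.1, (htotal2 S Sᶜ).resolve_left hp2, Or.inr hp2⟩

theorem nontrivial_envy_free_iff_MB_ne [Fintype α] [DecidableEq α]
    (pref1 pref2 : Finset α → Finset α → Prop)
    (htotal1 : ∀ S T : Finset α, pref1 S T ∨ pref1 T S)
    (htrans1 : ∀ S T U : Finset α, pref1 S T → pref1 T U → pref1 S U)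
    (hsep1 : Separable pref1)
    (hdes1 : ∀ x : α, strictPref pref1 {x} ∅)
    (htotal2 : ∀ S T : Finset α, pref2 S T ∨ pref2 T S)
    (htrans2 : ∀ S T U : Finset α, pref2 S T → pref2 T U → pref2 S U)
    (hsep2 : Separable pref2)
    (hdes2 : ∀ x : α, strictPref pref2 {x} ∅) :
    (∃ S : Finset α, (pref1 S Sᶜ ∧ pref2 Sᶜ S) ∧
        ¬ ((pref1 S Sᶜ ∧ pref1 Sᶜ S) ∧ (pref2 Sᶜ S ∧ pref2 S Sᶜ))) ↔
      {S : Finset α | MinimalBundle pref1 S} ≠ {S : Finset α | MinimalBundle pref2 S} := by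
  constructor
  · rintro ⟨S, ⟨hef1, hef2⟩, hnt⟩ heq
    apply hnt
    have hmem : ∀ T : Finset α, MinimalBundle pref1 T ↔ MinimalBundle pref2 T := by
      intro T
      have := Set.ext_iff.mp heq T
      simpa using this
    -- pref2 S Sᶜ : S is acceptable to 1, take minimal bundle inside, it's a bundle for 2 too
    have hp2 : pref2 S Sᶜ := by
      obtain ⟨M, hMS, hM⟩ := exists_minimal pref1 htotal1 S hef1
      have hM2 : MinimalBundle pref2 M := (hmem M).mp hM
      exact acceptable_up pref2 htotal2 htrans2 hsep2 hdes2 hMS hM2.1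
    have hp1 : pref1 Sᶜ S := by
      have hef2' : pref2 Sᶜ Sᶜᶜ := by rw [compl_compl]; exact hef2
      obtain ⟨M, hMS, hM⟩ := exists_minimal pref2 htotal2 Sᶜ hef2'
      have hM1 : MinimalBundle pref1 M := (hmem M).mpr hM
      have := acceptable_up pref1 htotal1 htrans1 hsep1 hdes1 hMS hM1.1
      rwa [compl_compl] at this
    exact ⟨⟨hef1, hp1⟩, hef2, hp2⟩
  · intro hne
    have : ∃ S : Finset α, (MinimalBundle pref1 S ∧ ¬ MinimalBundle pref2 S) ∨
        (MinimalBundle pref2 S ∧ ¬ MinimalBundle pref1 S) := by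
      by_contra h
      push_neg at h
      apply hne
      ext S
      simp only [Set.mem_setOf_eq]
      have := h S
      tauto
    obtain ⟨S, h | h⟩ := this
    · obtain ⟨B, hb1, hb2, hb3⟩ := split_of_mb_diff pref1 pref2 htotal2 h.1 h.2
      exact ⟨B, ⟨hb1, hb2⟩, fun ⟨⟨_, c1⟩, ⟨_, c2⟩⟩ => hb3.elim (· c1) (· c2)⟩
    · obtain ⟨B, hb1, hb2, hb3⟩ := split_of_mb_diff pref2 pref1 htotal1 h.1 h.2
      refine ⟨Bᶜ, ⟨?_, ?_⟩, ?_⟩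
      · rw [compl_compl]; exact hb2
      · rw [compl_compl]; exact hb1
      · rw [compl_compl]
        rintro ⟨⟨_, c1⟩, ⟨_, c2⟩⟩
        exact hb3.elim (· c2) (· c1)
end

section
/- If both agents have complete, transitive, separable preferences with all objects desirable and MB_1 = MB_2, then every envy-free split (S, −S) is trivial, i.e., S ∼_1 −S and −S ∼_2 S. -/
variable {α : Type*}

private lemma union_mono_pref [Fintype α] [DecidableEq α] {pref : Finset α → Finset α → Prop}
    (htotal : ∀ S T : Finset α, pref S T ∨ pref T S)
    (htrans : ∀ S T U : Finset α, pref S T → pref T U → pref S U)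
    (hsep : Separable pref) (hdes : ∀ x : α, strictPref pref {x} ∅) :
    ∀ (C A : Finset α), pref (A ∪ C) A := by
  intro C
  induction C using Finset.induction_on with
  | empty => intro A; simpa using (htotal A A).elim id id
  | @insert x C' _ ih =>
    intro A
    have h1 : A ∪ insert x C' = insert x (A ∪ C') := Finset.union_insert x A C'
    by_cases hxc : x ∈ A ∪ C'
    · rw [h1, Finset.insert_eq_self.2 hxc]; exact ih A
    · rw [h1]
      have hstep := ((hsep (A ∪ C') x hxc).1 (hdes x)).1
      exact htrans _ _ _ hstep (ih A)

private lemma mono_pref [Fintype α] [DecidableEq α] {pref : Finset α → Finset α → Prop}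
    (htotal : ∀ S T : Finset α, pref S T ∨ pref T S)
    (htrans : ∀ S T U : Finset α, pref S T → pref T U → pref S U)
    (hsep : Separable pref) (hdes : ∀ x : α, strictPref pref {x} ∅)
    {A B : Finset α} (hAB : A ⊆ B) : pref B A := by
  have := union_mono_pref htotal htrans hsep hdes B A
  rwa [Finset.union_eq_right.2 hAB] at this

private lemma exists_mb [Fintype α] [DecidableEq α] {pref : Finset α → Finset α → Prop}
    (htotal : ∀ S T : Finset α, pref S T ∨ pref T S) :
    ∀ S : Finset α, pref S Sᶜ → ∃ M, M ⊆ S ∧ MinimalBundle pref M := by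
  intro S
  induction S using Finset.strongInductionOn with
  | _ S ih =>
    intro hS
    by_cases h : ∃ T, T ⊂ S ∧ pref T Tᶜ
    · obtain ⟨T, hTS, hT⟩ := h
      obtain ⟨M, hMT, hM⟩ := ih T hTS hT
      exact ⟨M, hMT.trans hTS.subset, hM⟩
    · push_neg at h
      refine ⟨S, Finset.Subset.refl S, hS, fun T hT => ?_⟩
      have hnT := h T hT
      exact ⟨(htotal T Tᶜ).resolve_left hnT, hnT⟩

theorem envy_free_trivial_of_MB_eq [Fintype α] [DecidableEq α]
    (pref1 pref2 : Finset α → Finset α → Prop)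
    (htotal1 : ∀ S T : Finset α, pref1 S T ∨ pref1 T S)
    (htrans1 : ∀ S T U : Finset α, pref1 S T → pref1 T U → pref1 S U)
    (hsep1 : Separable pref1)
    (hdes1 : ∀ x : α, strictPref pref1 {x} ∅)
    (htotal2 : ∀ S T : Finset α, pref2 S T ∨ pref2 T S)
    (htrans2 : ∀ S T U : Finset α, pref2 S T → pref2 T U → pref2 S U)
    (hsep2 : Separable pref2)
    (hdes2 : ∀ x : α, strictPref pref2 {x} ∅)
    (hMB : {S : Finset α | MinimalBundle pref1 S} = {S : Finset α | MinimalBundle pref2 S}) :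
    ∀ S : Finset α, (pref1 S Sᶜ ∧ pref2 Sᶜ S) →
      ((pref1 S Sᶜ ∧ pref1 Sᶜ S) ∧ (pref2 Sᶜ S ∧ pref2 S Sᶜ)) := by
  intro S hS
  obtain ⟨h1, h2⟩ := hS
  -- agent 2: S ≿₂ Sᶜ
  obtain ⟨M, hMS, hM⟩ := exists_mb htotal1 S h1
  have hM2 : MinimalBundle pref2 M := (Set.ext_iff.1 hMB M).1 hM
  have h2' : pref2 S Sᶜ := by
    have a : pref2 S M := mono_pref htotal2 htrans2 hsep2 hdes2 hMS
    have c : pref2 Mᶜ Sᶜ :=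
      mono_pref htotal2 htrans2 hsep2 hdes2 (Finset.compl_subset_compl.2 hMS)
    exact htrans2 _ _ _ (htrans2 _ _ _ a hM2.1) c
  -- agent 1: Sᶜ ≿₁ S
  obtain ⟨M', hM'S, hM'2⟩ := exists_mb htotal2 Sᶜ (by rw [compl_compl]; exact h2)
  have hM'1 : MinimalBundle pref1 M' := (Set.ext_iff.1 hMB M').2 hM'2
  have h1' : pref1 Sᶜ S := by
    have a : pref1 Sᶜ M' := mono_pref htotal1 htrans1 hsep1 hdes1 hM'S
    have hSM : S ⊆ M'ᶜ := by
      have := Finset.compl_subset_compl.2 hM'S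
      simpa using this
    have c : pref1 M'ᶜ S := mono_pref htotal1 htrans1 hsep1 hdes1 hSM
    exact htrans1 _ _ _ (htrans1 _ _ _ a hM'1.1) c
  exact ⟨⟨h1, h1'⟩, ⟨h2, h2'⟩⟩
end
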